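/- arXiv:2103.15811 — 4 statements merged into one kernel-verified Lean document; each statement's English description precedes it below -/
import Mathlib

section
/- If λ is the eigenvalue vector (in some order) of a real symmetric matrix X all of whose k×k principal submatrices are positive semidefinite, and λ⁺ ∈ ℝⁿ has all nonnegative entries, then λ + λ⁺ is the eigenvalue vector (in some order) of some real symmetric matrix all of whose k×k principal submatrices are positive semidefinite. In other words, the set λ(S^{n,k}) of permuted eigenvalue vectors of matrices in S^{n,k} is closed under adding nonnegative vectors. -/
/-- `X` is `k`-locally PSD: every `k × k` principal submatrix of `X` is positive semidefinite. -/
def LocallyPSD {ι : Type} [Fintype ι] (k : ℕ) (X : Matrix ι ι ℝ) : Prop :=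
  ∀ S : Finset ι, S.card = k →
    (X.submatrix (fun i : S => (i : ι)) (fun i : S => (i : ι))).PosSemidef

/-- `l` is, up to permutation, the eigenvalue vector of some `k`-locally PSD real symmetric
`n × n` matrix. -/
def IsEigTupleLocallyPSD (n k : ℕ) (l : Fin n → ℝ) : Prop :=
  ∃ (X : Matrix (Fin n) (Fin n) ℝ) (hX : X.IsHermitian),
    LocallyPSD k X ∧ ∃ σ : Equiv.Perm (Fin n), l = hX.eigenvalues ∘ σ

open Matrix Polynomial

/-- Characteristic polynomial is invariant under conjugation. -/
lemma aux_charpoly_conj {n : ℕ} (U A V : Matrix (Fin n) (Fin n) ℝ)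
    (hUV : U * V = 1) : (U * A * V).charpoly = A.charpoly := by
  set φ : Matrix (Fin n) (Fin n) ℝ →+* Matrix (Fin n) (Fin n) ℝ[X] :=
    (Polynomial.C : ℝ →+* ℝ[X]).mapMatrix with hφ
  have h1 : φ U * Matrix.scalar (Fin n) (X : ℝ[X]) * φ V
      = Matrix.scalar (Fin n) (X : ℝ[X]) := by
    rw [← (Matrix.scalar_commute (X : ℝ[X]) (fun r => Commute.all _ _) (φ U)).eq,
      mul_assoc, ← _root_.map_mul φ, hUV, _root_.map_one φ, mul_one]
  have hc : charmatrix (U * A * V) = φ U * charmatrix A * φ V := by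
    calc charmatrix (U * A * V)
        = Matrix.scalar (Fin n) (X : ℝ[X]) - φ (U * A * V) := rfl
      _ = φ U * Matrix.scalar (Fin n) (X : ℝ[X]) * φ V - φ U * φ A * φ V := by
          rw [h1, _root_.map_mul φ, _root_.map_mul φ]
      _ = φ U * charmatrix A * φ V := by
          show _ = φ U * (Matrix.scalar (Fin n) (X : ℝ[X]) - φ A) * φ V
          rw [mul_sub, sub_mul]
  have hdet : (φ U).det * (φ V).det = 1 := by
    rw [← Matrix.det_mul, ← _root_.map_mul φ, hUV, _root_.map_one φ, Matrix.det_one]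
  unfold Matrix.charpoly
  rw [hc, Matrix.det_mul, Matrix.det_mul, mul_comm ((φ U).det), mul_assoc, hdet, mul_one]

lemma aux_charpoly_diagonal {n : ℕ} (d : Fin n → ℝ) :
    (Matrix.diagonal d).charpoly = ∏ i, (X - Polynomial.C (d i)) := by
  have h : charmatrix (Matrix.diagonal d) =
      Matrix.diagonal (fun i => X - Polynomial.C (d i)) := by
    ext i j
    by_cases hij : i = j
    · subst hij; simp
    · simp [hij]
  rw [Matrix.charpoly, h, Matrix.det_diagonal]

lemma aux_exists_perm_of_perm {n : ℕ} {f g : Fin n → ℝ}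
    (h : (List.ofFn f).Perm (List.ofFn g)) : ∃ σ : Equiv.Perm (Fin n), f = g ∘ σ := by
  have hf : Monotone (f ∘ Tuple.sort f) := Tuple.monotone_sort f
  have hg : Monotone (g ∘ Tuple.sort g) := Tuple.monotone_sort g
  have hperm : (List.ofFn (f ∘ Tuple.sort f)).Perm (List.ofFn (g ∘ Tuple.sort g)) :=
    ((Tuple.sort f).ofFn_comp_perm f).trans (h.trans ((Tuple.sort g).ofFn_comp_perm g).symm)
  have heq : f ∘ Tuple.sort f = g ∘ Tuple.sort g :=
    List.ofFn_injective (List.Perm.eq_of_sortedLE hf.sortedLE_ofFn hg.sortedLE_ofFn hperm)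
  refine ⟨(Tuple.sort f).symm.trans (Tuple.sort g), ?_⟩
  funext i
  have := congrFun heq ((Tuple.sort f).symm i)
  simpa using this

/-- If a real symmetric matrix is conjugate (by a matrix with a right inverse equal to its
conjugate transpose) to a real diagonal matrix, then the diagonal is, up to permutation, the
eigenvalue vector. -/
lemma aux_eigs_of_conj {n : ℕ} {B : Matrix (Fin n) (Fin n) ℝ} (hB : B.IsHermitian)
    {U : Matrix (Fin n) (Fin n) ℝ} (hU : U * Uᴴ = 1) (d : Fin n → ℝ)
    (hBU : B = U * Matrix.diagonal d * Uᴴ) :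
    ∃ τ : Equiv.Perm (Fin n), d = hB.eigenvalues ∘ τ := by
  have h1 : B.charpoly = (Matrix.diagonal d).charpoly := by
    rw [hBU]; exact aux_charpoly_conj _ _ _ hU
  have h2 : B.charpoly = (Matrix.diagonal hB.eigenvalues).charpoly := by
    set W : Matrix (Fin n) (Fin n) ℝ := (hB.eigenvectorUnitary : Matrix (Fin n) (Fin n) ℝ)
    have hW : W * star W = 1 := (Matrix.mem_unitaryGroup_iff).mp hB.eigenvectorUnitary.2
    have hspec : B = W * Matrix.diagonal hB.eigenvalues * star W := by
      have := hB.spectral_theorem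
      simpa [RCLike.ofReal_real_eq_id] using this
    exact (congrArg Matrix.charpoly hspec).trans (aux_charpoly_conj _ _ _ hW)
  -- equal multisets of eigenvalues
  have hprod : ∀ f : Fin n → ℝ, (Matrix.diagonal f).charpoly =
      (Multiset.map (fun a => X - Polynomial.C a)
        (Multiset.map f Finset.univ.val)).prod := by
    intro f
    rw [aux_charpoly_diagonal, Finset.prod_eq_multiset_prod, Multiset.map_map]
    rfl
  have hms : Multiset.map d Finset.univ.val = Multiset.map hB.eigenvalues Finset.univ.val := by
    have hroots := congrArg Polynomial.roots (h1.symm.trans h2)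
    rwa [hprod d, hprod hB.eigenvalues, Polynomial.roots_multiset_prod_X_sub_C,
      Polynomial.roots_multiset_prod_X_sub_C] at hroots
  have huniv : (Finset.univ : Finset (Fin n)).val = (List.finRange n : List (Fin n)) := by
    rfl
  have hlp : (List.ofFn d).Perm (List.ofFn hB.eigenvalues) := by
    rw [← Multiset.coe_eq_coe]
    have : (↑(List.map d (List.finRange n)) : Multiset ℝ)
        = ↑(List.map hB.eigenvalues (List.finRange n)) := by
      rw [← Multiset.map_coe, ← Multiset.map_coe, ← huniv]
      exact hms
    simpa [List.ofFn_eq_map] using this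
  exact aux_exists_perm_of_perm hlp

/-- `λ(S^{n,k})` is closed under adding nonnegative vectors. -/
theorem eigTuple_add_nonneg (n k : ℕ) (l lplus : Fin n → ℝ)
    (hl : IsEigTupleLocallyPSD n k l) (hplus : ∀ i, 0 ≤ lplus i) :
    IsEigTupleLocallyPSD n k (l + lplus) := by
  obtain ⟨X, hX, hloc, σ, hlσ⟩ := hl
  set U : Matrix (Fin n) (Fin n) ℝ := (hX.eigenvectorUnitary : Matrix (Fin n) (Fin n) ℝ) with hUdef
  have hU : U * Uᴴ = 1 := (Matrix.mem_unitaryGroup_iff).mp hX.eigenvectorUnitary.2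
  set e : Fin n → ℝ := fun i => hX.eigenvalues i + lplus (σ.symm i) with he
  set X' : Matrix (Fin n) (Fin n) ℝ := U * Matrix.diagonal e * Uᴴ with hX'def
  have hX' : X'.IsHermitian :=
    Matrix.isHermitian_mul_mul_conjTranspose U (Matrix.isHermitian_diagonal e)
  have hspec : X = U * Matrix.diagonal hX.eigenvalues * Uᴴ := by
    have := hX.spectral_theorem
    simp only [Unitary.conjStarAlgAut_apply, RCLike.ofReal_real_eq_id, Function.id_comp] at this
    rw [← hUdef] at this
    simpa [Matrix.star_eq_conjTranspose] using this
  -- the correction term is positive semidefinite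
  have hP : (U * Matrix.diagonal (fun i => lplus (σ.symm i)) * Uᴴ).PosSemidef := by
    have hD : (Matrix.diagonal (fun i => lplus (σ.symm i))).PosSemidef :=
      Matrix.posSemidef_diagonal_iff.mpr (fun i => hplus _)
    exact hD.mul_mul_conjTranspose_same U
  have hsplit : X' = X + U * Matrix.diagonal (fun i => lplus (σ.symm i)) * Uᴴ := by
    rw [hX'def, hspec, he]
    have : Matrix.diagonal (fun i => hX.eigenvalues i + lplus (σ.symm i))
        = Matrix.diagonal hX.eigenvalues + Matrix.diagonal (fun i => lplus (σ.symm i)) := by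
      rw [Matrix.diagonal_add]
    rw [this, Matrix.mul_add, Matrix.add_mul]
  refine ⟨X', hX', ?_, ?_⟩
  · intro S hS
    rw [hsplit, Matrix.submatrix_add]
    exact (hloc S hS).add (hP.submatrix _)
  · obtain ⟨τ, hτ⟩ := aux_eigs_of_conj hX' hU e rfl
    refine ⟨σ.trans τ, ?_⟩
    funext i
    have h1 : (l + lplus) i = e (σ i) := by
      simp [he, Pi.add_apply, hlσ]
    rw [h1, hτ]
    rfl
end

section
/- A vector λ ∈ ℝⁿ is (up to permutation of its entries) the eigenvalue vector of some n×n real symmetric matrix with all diagonal entries nonnegative if and only if the sum of its entries is nonnegative. Equivalently, λ(S^{n,1}) = {λ ∈ ℝⁿ : λ₁ + ⋯ + λₙ ≥ 0}. -/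
open Matrix Polynomial

lemma charpoly_conj_aux {ι : Type} [Fintype ι] [DecidableEq ι]
    (U V A : Matrix ι ι ℝ) (hUV : U * V = 1) :
    (U * A * V).charpoly = A.charpoly := by
  have hscal : (C : ℝ →+* ℝ[X]).mapMatrix U * Matrix.scalar ι (X : ℝ[X]) *
      (C : ℝ →+* ℝ[X]).mapMatrix V = Matrix.scalar ι (X : ℝ[X]) := by
    rw [scalar_apply, ← smul_one_eq_diagonal, Matrix.mul_smul, Matrix.smul_mul, Matrix.mul_one,
      ← _root_.map_mul, hUV, _root_.map_one]
  have hc : charmatrix (U * A * V)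
      = (C : ℝ →+* ℝ[X]).mapMatrix U * charmatrix A * (C : ℝ →+* ℝ[X]).mapMatrix V := by
    rw [charmatrix, charmatrix, Matrix.mul_sub, Matrix.sub_mul, hscal, ← _root_.map_mul, ← _root_.map_mul]
  have hdet : ((C : ℝ →+* ℝ[X]).mapMatrix U).det * ((C : ℝ →+* ℝ[X]).mapMatrix V).det = 1 := by
    rw [← det_mul, ← _root_.map_mul, hUV, _root_.map_one, det_one]
  rw [Matrix.charpoly, Matrix.charpoly, hc, det_mul, det_mul, mul_right_comm, hdet, one_mul]

lemma exists_perm_of_multiset_eq {n : ℕ} {f g : Fin n → ℝ}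
    (h : Finset.univ.val.map f = Finset.univ.val.map g) :
    ∃ σ : Equiv.Perm (Fin n), f = g ∘ σ := by
  have hperm : List.Perm (List.ofFn f) (List.ofFn g) := by
    rw [List.ofFn_eq_map, List.ofFn_eq_map, ← Multiset.coe_eq_coe]
    exact_mod_cast h
  have h2 : List.ofFn (f ∘ Tuple.sort f) = List.ofFn (g ∘ Tuple.sort g) :=
    List.Perm.eq_of_sortedLE
      ((Tuple.monotone_sort f).sortedLE_ofFn) ((Tuple.monotone_sort g).sortedLE_ofFn)
      (((Tuple.sort f).ofFn_comp_perm f).trans (hperm.trans ((Tuple.sort g).ofFn_comp_perm g).symm))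
  have h3 : f ∘ Tuple.sort f = g ∘ Tuple.sort g := List.ofFn_injective h2
  refine ⟨(Tuple.sort f).symm.trans (Tuple.sort g), funext fun x => ?_⟩
  simpa using congrFun h3 ((Tuple.sort f).symm x)

lemma submatrix_singleton {n : ℕ} (X : Matrix (Fin n) (Fin n) ℝ) (i : Fin n) :
    X.submatrix (fun p : ({i} : Finset (Fin n)) => (p : Fin n)) (fun p : ({i} : Finset (Fin n)) => (p : Fin n))
      = Matrix.diagonal (fun _ => X i i) := by
  ext p q
  have hp : (p : Fin n) = i := Finset.mem_singleton.mp p.2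
  have hq : (q : Fin n) = i := Finset.mem_singleton.mp q.2
  have hpq : p = q := Subtype.ext (by rw [hp, hq])
  subst hpq
  simp [Matrix.submatrix_apply, hp]

lemma sum_eigenvalues_eq {n : ℕ} (X : Matrix (Fin n) (Fin n) ℝ) (hX : X.IsHermitian) :
    ∑ i, hX.eigenvalues i = ∑ i, X i i := by
  have hsp := hX.spectral_theorem
  have hs : star (hX.eigenvectorUnitary : Matrix (Fin n) (Fin n) ℝ)
      * (hX.eigenvectorUnitary : Matrix (Fin n) (Fin n) ℝ) = 1 :=
    Matrix.mem_unitaryGroup_iff'.mp (hX.eigenvectorUnitary).2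
  have htr : X.trace
      = (Matrix.diagonal (RCLike.ofReal ∘ hX.eigenvalues) : Matrix (Fin n) (Fin n) ℝ).trace := by
    conv_lhs => rw [hsp]
    rw [Unitary.conjStarAlgAut_apply, Matrix.trace_mul_cycle, hs, Matrix.one_mul]
  rw [Matrix.trace_diagonal] at htr
  have : ∀ i, (RCLike.ofReal ∘ hX.eigenvalues) i = hX.eigenvalues i := by
    intro i; simp [RCLike.ofReal_real_eq_id]
  simp only [this] at htr
  rw [← htr]; rfl

section
variable {ι : Type} [Fintype ι] [DecidableEq ι]

def splitEquiv (k j : ι) (hjk : j ≠ k) :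
    (Unit ⊕ Unit ⊕ {i : ι // i ≠ k ∧ i ≠ j}) ≃ ι where
  toFun := Sum.elim (fun _ => k) (Sum.elim (fun _ => j) Subtype.val)
  invFun i := if h1 : i = k then Sum.inl () else if h2 : i = j then Sum.inr (Sum.inl ())
    else Sum.inr (Sum.inr ⟨i, h1, h2⟩)
  left_inv := by rintro (⟨⟩ | ⟨⟩ | ⟨r, h1, h2⟩) <;> simp [hjk, *]
  right_inv i := by
    by_cases h1 : i = k
    · simp [h1]
    · by_cases h2 : i = j <;> simp [h1, h2, hjk]
end

def rot {ρ : Type} [DecidableEq ρ] (c s : ℝ) :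
    Matrix (Unit ⊕ Unit ⊕ ρ) (Unit ⊕ Unit ⊕ ρ) ℝ :=
  Matrix.of fun i j => match i, j with
  | .inl _, .inl _ => c
  | .inl _, .inr (.inl _) => s
  | .inr (.inl _), .inl _ => -s
  | .inr (.inl _), .inr (.inl _) => c
  | .inr (.inr r), .inr (.inr r') => if r = r' then 1 else 0
  | _, _ => 0

section
variable {ρ : Type} [Fintype ρ] [DecidableEq ρ]

lemma rot_orth (c s : ℝ) (hcs : c ^ 2 + s ^ 2 = 1) :
    rot (ρ := ρ) c s * (rot c s)ᵀ = 1 := by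
  ext i j
  rw [Matrix.mul_apply]
  simp only [Matrix.transpose_apply]
  rcases i with _ | _ | r <;> rcases j with _ | _ | r' <;>
      simp [rot, Fintype.sum_sum_type, Matrix.one_apply, mul_ite, ite_mul,
        Finset.sum_ite_eq] <;>
      (try linear_combination hcs) <;> (try ring) <;> (try (split_ifs <;> simp_all))

lemma rot_conj (a b c s : ℝ) (g : ρ → ℝ)
    (h00 : a * c ^ 2 + b * s ^ 2 = 0) (h11 : a * s ^ 2 + b * c ^ 2 = a + b) :
    rot (ρ := ρ) c s * Matrix.diagonal (Sum.elim (fun _ => a) (Sum.elim (fun _ => b) g))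
        * (rot c s)ᵀ
      = Matrix.fromBlocks 0
          (Matrix.of fun _ x => Sum.elim (fun _ => c * s * (b - a)) (fun _ => (0 : ℝ)) x)
          (Matrix.of fun x _ => Sum.elim (fun _ => c * s * (b - a)) (fun _ => (0 : ℝ)) x)
          (Matrix.diagonal (Sum.elim (fun _ => a + b) g)) := by
  ext i j
  rw [Matrix.mul_apply]
  simp only [Matrix.mul_diagonal, Matrix.transpose_apply]
  rcases i with _ | _ | r <;> rcases j with _ | _ | r' <;>
      simp [rot, Fintype.sum_sum_type, Matrix.diagonal_apply, mul_ite, ite_mul,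
        Finset.sum_ite_eq] <;>
      (try linear_combination h00) <;> (try linear_combination h11) <;> (try ring) <;>
      (try (split_ifs <;> simp_all))
end

lemma step {ι : Type} [Fintype ι] [DecidableEq ι] (l : ι → ℝ) (k j : ι) (hjk : j ≠ k)
    (hj : l j < 0) (hk : 0 < l k)
    (V : Matrix (Unit ⊕ {i : ι // i ≠ k ∧ i ≠ j}) (Unit ⊕ {i : ι // i ≠ k ∧ i ≠ j}) ℝ)
    (hV : V * Vᵀ = 1)
    (hVd : ∀ x : Unit ⊕ {i : ι // i ≠ k ∧ i ≠ j}, 0 ≤ ((V * Matrix.diagonal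
        (Sum.elim (fun _ => l k + l j) (fun r : {i : ι // i ≠ k ∧ i ≠ j} => l r.1)) * Vᵀ :
        Matrix (Unit ⊕ {i : ι // i ≠ k ∧ i ≠ j}) (Unit ⊕ {i : ι // i ≠ k ∧ i ≠ j}) ℝ)) x x) :
    ∃ U : Matrix ι ι ℝ, U * Uᵀ = 1 ∧ ∀ i, 0 ≤ (U * Matrix.diagonal l * Uᵀ) i i := by
  set a := l k with ha'
  set b := l j with hb'
  have hab : 0 < a - b := by dsimp [a, b]; linarith
  set c := Real.sqrt (-b / (a - b)) with hc'
  set s := Real.sqrt (a / (a - b)) with hs'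
  have hc2 : c ^ 2 = -b / (a - b) := Real.sq_sqrt (div_nonneg (by linarith) (by linarith))
  have hs2 : s ^ 2 = a / (a - b) := Real.sq_sqrt (div_nonneg (by linarith) (by linarith))
  have hcs : c ^ 2 + s ^ 2 = 1 := by rw [hc2, hs2]; field_simp; ring
  have h00 : a * c ^ 2 + b * s ^ 2 = 0 := by rw [hc2, hs2]; field_simp; ring
  have h11 : a * s ^ 2 + b * c ^ 2 = a + b := by rw [hc2, hs2]; field_simp; ring
  set e := splitEquiv k j hjk with he
  have hl₀ : (l ∘ e) = Sum.elim (fun _ => a) (Sum.elim (fun _ => b) (fun r : {i : ι // i ≠ k ∧ i ≠ j} => l r.1)) := by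
    funext x; rcases x with _ | _ | r <;> rfl
  set F : Matrix (Unit ⊕ Unit ⊕ {i : ι // i ≠ k ∧ i ≠ j}) (Unit ⊕ Unit ⊕ {i : ι // i ≠ k ∧ i ≠ j}) ℝ :=
    Matrix.fromBlocks (1 : Matrix Unit Unit ℝ) 0 0 V with hF
  set U₀ := F * rot c s with hU₀'
  have hrot := rot_orth (ρ := {i : ι // i ≠ k ∧ i ≠ j}) c s hcs
  have hFF : F * Fᵀ = 1 := by
    rw [hF, Matrix.fromBlocks_transpose, Matrix.fromBlocks_multiply]
    simp [hV, Matrix.fromBlocks_one]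
  have hU₀ : U₀ * U₀ᵀ = 1 := by
    rw [hU₀', Matrix.transpose_mul, Matrix.mul_assoc, ← Matrix.mul_assoc (rot c s), hrot,
      Matrix.one_mul, hFF]
  have hconj : U₀ * Matrix.diagonal (l ∘ e) * U₀ᵀ
      = Matrix.fromBlocks
          (0 : Matrix Unit Unit ℝ)
          ((Matrix.of fun _ x => Sum.elim (fun _ => c * s * (b - a)) (fun _ => (0 : ℝ)) x) * Vᵀ)
          (V * (Matrix.of fun x _ => Sum.elim (fun _ => c * s * (b - a)) (fun _ => (0 : ℝ)) x))
          (V * Matrix.diagonal (Sum.elim (fun _ => a + b) (fun r : {i : ι // i ≠ k ∧ i ≠ j} => l r.1)) * Vᵀ) := by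
    rw [hl₀, hU₀']
    have hmid := rot_conj (ρ := {i : ι // i ≠ k ∧ i ≠ j}) a b c s (fun r : {i : ι // i ≠ k ∧ i ≠ j} => l r.1) h00 h11
    calc F * rot c s * Matrix.diagonal
            (Sum.elim (fun _ => a) (Sum.elim (fun _ => b) (fun r : {i : ι // i ≠ k ∧ i ≠ j} => l r.1)))
            * (F * rot c s)ᵀ
        = F * (rot c s * Matrix.diagonal
            (Sum.elim (fun _ => a) (Sum.elim (fun _ => b) (fun r : {i : ι // i ≠ k ∧ i ≠ j} => l r.1)))
            * (rot c s)ᵀ) * Fᵀ := by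
          simp only [Matrix.transpose_mul, Matrix.mul_assoc]
      _ = F * (Matrix.fromBlocks 0
            (Matrix.of fun _ x => Sum.elim (fun _ => c * s * (b - a)) (fun _ => (0 : ℝ)) x)
            (Matrix.of fun x _ => Sum.elim (fun _ => c * s * (b - a)) (fun _ => (0 : ℝ)) x)
            (Matrix.diagonal (Sum.elim (fun _ => a + b) (fun r : {i : ι // i ≠ k ∧ i ≠ j} => l r.1)))) * Fᵀ := by
          rw [hmid]
      _ = _ := by
          rw [hF, Matrix.fromBlocks_transpose, Matrix.fromBlocks_multiply,
            Matrix.fromBlocks_multiply]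
          simp [Matrix.mul_assoc]
          exact ⟨rfl, rfl⟩
  refine ⟨U₀.submatrix e.symm e.symm, ?_, ?_⟩
  · rw [Matrix.transpose_submatrix, Matrix.submatrix_mul_equiv, hU₀,
      Matrix.submatrix_one_equiv]
  · intro i
    have hdl : Matrix.diagonal l = (Matrix.diagonal (l ∘ e)).submatrix e.symm e.symm := by
      have h1 : (l ∘ ⇑e) ∘ ⇑e.symm = l := by funext x; simp
      rw [Matrix.submatrix_diagonal_equiv, h1]
    rw [hdl, Matrix.transpose_submatrix, Matrix.submatrix_mul_equiv,
      Matrix.submatrix_mul_equiv, hconj]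
    rcases hx : e.symm i with u | x
    · simp [Matrix.submatrix_apply, hx]
    · simpa [Matrix.submatrix_apply, hx] using hVd x

lemma key (N : ℕ) : ∀ (ι : Type) [Fintype ι] [DecidableEq ι], Fintype.card ι = N →
    ∀ l : ι → ℝ, 0 ≤ ∑ i, l i →
    ∃ U : Matrix ι ι ℝ, U * Uᵀ = 1 ∧ ∀ i, 0 ≤ (U * Matrix.diagonal l * Uᵀ) i i := by
  induction N using Nat.strong_induction_on with
  | _ N IH =>
  intro ι _ _ hcard l hl
  by_cases hpos : ∀ i, 0 ≤ l i
  · exact ⟨1, by simp, fun i => by simpa using hpos i⟩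
  push_neg at hpos
  obtain ⟨j, hj⟩ := hpos
  have hex : ∃ k, 0 < l k := by
    by_contra hk
    push_neg at hk
    have hlt : ∑ i, l i < ∑ _i : ι, (0 : ℝ) :=
      Finset.sum_lt_sum (fun i _ => hk i) ⟨j, Finset.mem_univ j, hj⟩
    simp at hlt
    linarith
  obtain ⟨k, hk⟩ := hex
  have hjk : j ≠ k := fun h => absurd (h ▸ hj) (not_lt.mpr hk.le)
  have hcount := Fintype.card_congr (splitEquiv k j hjk)
  simp only [Fintype.card_sum, Fintype.card_unit] at hcount
  have hcard' : Fintype.card (Unit ⊕ {i : ι // i ≠ k ∧ i ≠ j}) < N := by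
    simp only [Fintype.card_sum, Fintype.card_unit]
    omega
  have hS := Equiv.sum_comp (splitEquiv k j hjk) l
  simp only [Fintype.sum_sum_type, Finset.univ_unique, Finset.sum_singleton] at hS
  have hsum : 0 ≤ ∑ x : Unit ⊕ {i : ι // i ≠ k ∧ i ≠ j}, (Sum.elim (fun _ => l k + l j)
      (fun r : {i : ι // i ≠ k ∧ i ≠ j} => l r.1)) x := by
    rw [Fintype.sum_sum_type]
    simp only [Finset.univ_unique, Finset.sum_singleton, Sum.elim_inl, Sum.elim_inr]
    have : (splitEquiv k j hjk) (Sum.inl ()) = k := rfl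
    simp [splitEquiv] at hS
    linarith
  obtain ⟨V, hV, hVd⟩ := IH (Fintype.card (Unit ⊕ {i : ι // i ≠ k ∧ i ≠ j})) hcard'
    (Unit ⊕ {i : ι // i ≠ k ∧ i ≠ j}) rfl _ hsum
  exact step l k j hjk hj hk V hV hVd

/-- `λ(S^{n,1}) = {λ ∈ ℝⁿ : λ₁ + ⋯ + λₙ ≥ 0}`: a vector is, up to permutation, the eigenvalue
vector of a real symmetric matrix with nonnegative diagonal iff its entries sum to a
nonnegative number. -/
theorem eigTuple_S_n_1 (n : ℕ) (hn : 1 ≤ n) :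
    {l : Fin n → ℝ | ∃ (X : Matrix (Fin n) (Fin n) ℝ) (hX : X.IsHermitian),
        LocallyPSD 1 X ∧ ∃ σ : Equiv.Perm (Fin n), l = hX.eigenvalues ∘ σ} =
      {l : Fin n → ℝ | 0 ≤ ∑ i, l i} := by
  ext l
  simp only [Set.mem_setOf_eq]
  constructor
  · rintro ⟨X, hX, hloc, σ, rfl⟩
    have h3 : ∀ i, 0 ≤ X i i := by
      intro i
      have h := hloc {i} (Finset.card_singleton i)
      rw [submatrix_singleton] at h
      exact (Matrix.posSemidef_diagonal_iff.mp h) ⟨i, Finset.mem_singleton_self i⟩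
    have h1 : ∑ i, (hX.eigenvalues ∘ σ) i = ∑ i, hX.eigenvalues i := Equiv.sum_comp σ _
    rw [h1, sum_eigenvalues_eq X hX]
    exact Finset.sum_nonneg fun i _ => h3 i
  · intro hl
    obtain ⟨U, hU, hdiag⟩ := key n (Fin n) (Fintype.card_fin n) l hl
    set A := U * Matrix.diagonal l * Uᵀ with hAdef
    have hT : Aᵀ = A := by
      rw [hAdef, Matrix.transpose_mul, Matrix.transpose_mul, Matrix.transpose_transpose,
        Matrix.diagonal_transpose, Matrix.mul_assoc]
    have hXsymm : A.IsHermitian := by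
      rw [Matrix.IsHermitian, Matrix.conjTranspose_eq_transpose_of_trivial, hT]
    refine ⟨A, hXsymm, ?_, ?_⟩
    · intro S hS
      obtain ⟨i, rfl⟩ := Finset.card_eq_one.mp hS
      rw [submatrix_singleton]
      exact Matrix.PosSemidef.diagonal (fun _ => hdiag i)
    · -- eigenvalues are a permutation of `l`
      have hch1 : A.charpoly = (Matrix.diagonal l).charpoly := charpoly_conj_aux U Uᵀ _ hU
      have hdiagch : ∀ f : Fin n → ℝ,
          (Matrix.diagonal f).charpoly = ∏ i, (Polynomial.X - C (f i)) := by
        intro f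
        have h := Matrix.charpoly_of_upperTriangular (Matrix.diagonal f)
          (Matrix.blockTriangular_diagonal f)
        simpa using h
      have hUmem : (hXsymm.eigenvectorUnitary : Matrix (Fin n) (Fin n) ℝ)
          * star (hXsymm.eigenvectorUnitary : Matrix (Fin n) (Fin n) ℝ) = 1 :=
        Matrix.mem_unitaryGroup_iff.mp (hXsymm.eigenvectorUnitary).2
      have hch3 : A.charpoly = ∏ i, (Polynomial.X - C (hXsymm.eigenvalues i)) := by
        conv_lhs => rw [hXsymm.spectral_theorem]
        rw [Unitary.conjStarAlgAut_apply, charpoly_conj_aux _ _ _ hUmem]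
        have hid : (RCLike.ofReal ∘ hXsymm.eigenvalues : Fin n → ℝ) = hXsymm.eigenvalues := by
          funext i; simp [RCLike.ofReal_real_eq_id]
        rw [hid, hdiagch]
      have hroots : ∀ f : Fin n → ℝ,
          (∏ i, ((Polynomial.X : ℝ[X]) - C (f i))).roots = Finset.univ.val.map f := by
        intro f
        rw [Finset.prod_eq_multiset_prod,
          show (fun i => (Polynomial.X : ℝ[X]) - C (f i)) = ((fun a => Polynomial.X - C a) ∘ f)
            from rfl,
          ← Multiset.map_map, Polynomial.roots_multiset_prod_X_sub_C]
      have hmult : Finset.univ.val.map l = Finset.univ.val.map hXsymm.eigenvalues := by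
        rw [← hroots l, ← hroots hXsymm.eigenvalues, ← hdiagch l, ← hch1, hch3]
      obtain ⟨σ, hσ⟩ := exists_perm_of_multiset_eq hmult
      exact ⟨σ, hσ⟩
end

section
/- Let λ₁ ≥ ⋯ ≥ λₙ be real numbers satisfying λ₁ + ⋯ + λᵢ ≥ 0 for every i ∈ {1,…,n}, with not all λⱼ zero, and let r be such that λ₁ ≥ ⋯ ≥ λ_r > 0 ≥ λ_{r+1} ≥ ⋯ ≥ λₙ. Define x by x₁ = ⋯ = x_r = (λ₁+⋯+λₙ)/r and x_{r+1} = ⋯ = xₙ = 0. Then x₁ + ⋯ + xᵢ ≤ λ₁ + ⋯ + λᵢ holds for every i ∈ {1,…,n}, and x₁ + ⋯ + xₙ = λ₁ + ⋯ + λₙ. -/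
/-- The majorization step: if `λ₁ ≥ ⋯ ≥ λₙ` has all partial sums nonnegative, is not
identically zero, and `r` marks the last strictly positive entry, then the vector `x` with
`x₁ = ⋯ = x_r = (Σλ)/r`, `x_{r+1} = ⋯ = xₙ = 0` is majorized by `λ`. -/
theorem majorization_step (n r : ℕ) (l : Fin n → ℝ)
    (hord : Antitone l)
    (hsums : ∀ i : Fin n, 0 ≤ ∑ j ∈ Finset.Iic i, l j)
    (hne : l ≠ 0)
    (hr1 : 1 ≤ r) (hrn : r ≤ n)
    (hpos : ∀ j : Fin n, (j : ℕ) < r → 0 < l j)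
    (hnonpos : ∀ j : Fin n, r ≤ (j : ℕ) → l j ≤ 0)
    (x : Fin n → ℝ)
    (hx : x = fun j : Fin n => if (j : ℕ) < r then (∑ i, l i) / r else 0) :
    (∀ i : Fin n, ∑ j ∈ Finset.Iic i, x j ≤ ∑ j ∈ Finset.Iic i, l j) ∧
      ∑ j, x j = ∑ j, l j := by
  subst hx
  have hr0 : (0:ℝ) < (r:ℝ) := by exact_mod_cast hr1
  set S := ∑ i, l i with hSdef
  set t : Finset (Fin n) := Finset.univ.filter (fun j : Fin n => (j:ℕ) < r) with ht
  have hcardt : t.card = r := by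
    have : (Finset.univ.filter (fun j : Fin n => (j:ℕ) < r)).card = (Finset.range r).card := by
      refine Finset.card_bij (fun j _ => (j : ℕ)) ?_ ?_ ?_
      · intro j hj; exact Finset.mem_range.mpr (Finset.mem_filter.mp hj).2
      · intro a ha b hb h; exact Fin.ext h
      · intro b hb
        simp only [Finset.mem_range] at hb
        exact ⟨⟨b, lt_of_lt_of_le hb hrn⟩, by simp [hb], rfl⟩
    rw [ht, this, Finset.card_range]
  have hxsum : ∀ s : Finset (Fin n),
      ∑ j ∈ s, (if (j : ℕ) < r then S / r else 0)
        = (s.filter (fun j : Fin n => (j:ℕ) < r)).card * (S / r) := by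
    intro s
    rw [← Finset.sum_filter, Finset.sum_const, nsmul_eq_mul]
  set Pr := ∑ j ∈ t, l j with hPrdef
  have hSPr : S ≤ Pr := by
    have hsplit := Finset.sum_filter_add_sum_filter_not Finset.univ
      (fun j : Fin n => (j:ℕ) < r) l
    have hrest : ∑ j ∈ Finset.univ.filter (fun j : Fin n => ¬ (j:ℕ) < r), l j ≤ 0 := by
      apply Finset.sum_nonpos
      intro j hj
      simp only [Finset.mem_filter, not_lt] at hj
      exact hnonpos j hj.2
    rw [hSdef]
    rw [← hsplit]
    simpa [ht, hPrdef] using hrest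
  have htotal : ∑ j : Fin n, (if (j : ℕ) < r then S / r else 0) = S := by
    rw [hxsum, ← ht, hcardt]
    field_simp
  refine ⟨?_, htotal⟩
  intro i
  rw [hxsum]
  set P := ∑ j ∈ Finset.Iic i, l j with hPdef
  by_cases hi : (i : ℕ) < r
  · -- filter over Iic i is all of Iic i
    have hfe : (Finset.Iic i).filter (fun j : Fin n => (j:ℕ) < r) = Finset.Iic i := by
      apply Finset.filter_true_of_mem
      intro j hj
      simp only [Finset.mem_Iic] at hj
      exact lt_of_le_of_lt (Fin.le_def.mp hj) hi
    rw [hfe, Fin.card_Iic]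
    -- Split Pr = P + Mid
    have hsplit := Finset.sum_filter_add_sum_filter_not t (fun j : Fin n => j ≤ i) l
    have hPe : t.filter (fun j : Fin n => j ≤ i) = Finset.Iic i := by
      ext j
      simp only [ht, Finset.mem_filter, Finset.mem_univ, true_and, Finset.mem_Iic]
      constructor
      · exact fun h => h.2
      · intro h; exact ⟨lt_of_le_of_lt (Fin.le_def.mp h) hi, h⟩
    set M := t.filter (fun j : Fin n => ¬ j ≤ i) with hM
    have hMid : Pr = P + ∑ j ∈ M, l j := by
      rw [hPrdef, ← hsplit, hPe, hPdef]
    have hcardM : M.card = r - (i + 1) := by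
      have hd : Finset.Iic i ∪ M = t := by rw [← hPe, hM, Finset.filter_union_filter_not_eq]
      have hdisj : Disjoint (Finset.Iic i) M := by
        rw [← hPe, hM]
        exact Finset.disjoint_filter_filter_not t t _
      have := Finset.card_union_of_disjoint hdisj
      rw [hd, hcardt, Fin.card_Iic] at this
      omega
    -- per-element bound
    have helem : ∀ j ∈ M, ((i:ℕ) + 1 : ℝ) * l j ≤ P := by
      intro j hj
      simp only [hM, Finset.mem_filter, not_le] at hj
      have hle : ∀ k ∈ Finset.Iic i, l j ≤ l k := by
        intro k hk
        exact hord (le_of_lt (lt_of_le_of_lt (Finset.mem_Iic.mp hk) hj.2))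
      calc ((i:ℕ) + 1 : ℝ) * l j = (Finset.Iic i).card * l j := by rw [Fin.card_Iic]; push_cast; ring
        _ = ∑ _k ∈ Finset.Iic i, l j := by rw [Finset.sum_const, nsmul_eq_mul]
        _ ≤ ∑ k ∈ Finset.Iic i, l k := Finset.sum_le_sum hle
        _ = P := rfl
    have hMsum : ((i:ℕ) + 1 : ℝ) * ∑ j ∈ M, l j ≤ (M.card : ℝ) * P := by
      rw [Finset.mul_sum]
      calc ∑ j ∈ M, ((i:ℕ) + 1 : ℝ) * l j ≤ ∑ _j ∈ M, P := Finset.sum_le_sum helem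
        _ = (M.card : ℝ) * P := by rw [Finset.sum_const, nsmul_eq_mul]
    have hcM : (M.card : ℝ) = (r : ℝ) - ((i:ℕ) + 1) := by
      rw [hcardM]; push_cast [Nat.cast_sub (by omega : i + 1 ≤ r)]; ring
    have hP0 : 0 ≤ P := hsums i
    -- (i+1) * Pr ≤ r * P
    have hkey : ((i:ℕ) + 1 : ℝ) * Pr ≤ (r : ℝ) * P := by
      rw [hMid]
      nlinarith [hMsum, hcM, hP0, mul_nonneg (by positivity : (0:ℝ) ≤ ((i:ℕ)+1:ℝ)) hP0]
    have hfinal : ((i:ℕ) + 1 : ℝ) * S ≤ (r : ℝ) * P := by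
      calc ((i:ℕ) + 1 : ℝ) * S ≤ ((i:ℕ) + 1 : ℝ) * Pr := by
            apply mul_le_mul_of_nonneg_left hSPr; positivity
        _ ≤ (r : ℝ) * P := hkey
    rw [← mul_div_assoc, div_le_iff₀ hr0]
    push_cast
    push_cast at hfinal
    linarith [hfinal]
  · -- r ≤ i
    have hri : r ≤ (i : ℕ) := not_lt.mp hi
    have hfe : (Finset.Iic i).filter (fun j : Fin n => (j:ℕ) < r) = t := by
      ext j
      simp only [ht, Finset.mem_filter, Finset.mem_Iic, Finset.mem_univ, true_and]
      constructor
      · exact fun h => h.2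
      · intro h
        exact ⟨Fin.le_def.mpr (by omega), h⟩
    rw [hfe, hcardt]
    have : (r : ℝ) * (S / r) = S := by field_simp
    rw [this]
    -- S ≤ P
    have hsplit := Finset.sum_filter_add_sum_filter_not Finset.univ
      (fun j : Fin n => j ≤ i) l
    have hIe : Finset.univ.filter (fun j : Fin n => j ≤ i) = Finset.Iic i := by
      ext j; simp
    have hrest : ∑ j ∈ Finset.univ.filter (fun j : Fin n => ¬ j ≤ i), l j ≤ 0 := by
      apply Finset.sum_nonpos
      intro j hj
      simp only [Finset.mem_filter, not_le] at hj
      exact hnonpos j (by have := Fin.lt_def.mp hj.2; omega)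
    rw [hSdef, ← hsplit, hIe]
    simpa [hPdef] using hrest
end

section
/- A nonzero vector in the hyperbolicity cone H(eⁿₖ) has at most n − k negative entries. -/
/-- The `k`-th elementary symmetric polynomial in `n` variables. -/
def esym (n k : ℕ) (l : Fin n → ℝ) : ℝ :=
  ∑ S ∈ Finset.univ.powersetCard k, ∏ i ∈ S, l i

open Polynomial

theorem card_pos_roots_toFinset (p : ℝ[X]) :
    (p.roots.toFinset.filter (fun x => 0 < x)).card ≤
      (((derivative p).roots.toFinset.filter (fun x => 0 < x)) \
        (p.roots.toFinset.filter (fun x => 0 < x))).card + 1 := by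
  rcases eq_or_ne (derivative p) 0 with hp' | hp'
  · rw [eq_C_of_derivative_eq_zero hp', roots_C, Multiset.toFinset_zero, Finset.filter_empty,
      Finset.card_empty]
    exact Nat.zero_le _
  have hp : p ≠ 0 := ne_of_apply_ne derivative (by rwa [derivative_zero])
  refine Finset.card_le_diff_of_interleaved fun x hx y hy hxy hxy' => ?_
  rw [Finset.mem_filter, Multiset.mem_toFinset, mem_roots hp] at hx hy
  obtain ⟨z, hz1, hz2⟩ := exists_deriv_eq_zero hxy p.continuousOn (hx.1.trans hy.1.symm)
  refine ⟨z, ?_, hz1⟩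
  rw [Finset.mem_filter, Multiset.mem_toFinset, mem_roots hp', IsRoot, ← p.deriv]
  exact ⟨hz2, hx.2.trans hz1.1⟩

theorem card_pos_roots_le_derivative (p : ℝ[X]) :
    Multiset.card (p.roots.filter (fun x => (0:ℝ) < x)) ≤
      Multiset.card ((derivative p).roots.filter (fun x => (0:ℝ) < x)) + 1 := by
  set s : Finset ℝ := p.roots.toFinset.filter (fun x => 0 < x) with hs
  set s' : Finset ℝ := (derivative p).roots.toFinset.filter (fun x => 0 < x) with hs'
  have hts : (p.roots.filter (fun x => (0:ℝ) < x)).toFinset = s := Multiset.toFinset_filter _ _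
  have hts' : ((derivative p).roots.filter (fun x => (0:ℝ) < x)).toFinset = s' :=
    Multiset.toFinset_filter _ _
  calc
    Multiset.card (p.roots.filter (fun x => (0:ℝ) < x))
        = ∑ x ∈ s, (p.roots.filter (fun x => (0:ℝ) < x)).count x := by
          rw [← hts, Multiset.toFinset_sum_count_eq]
    _ = ∑ x ∈ s, p.roots.count x := by
          refine Finset.sum_congr rfl fun x hx => ?_
          rw [Multiset.count_filter_of_pos (Finset.mem_filter.1 hx).2]
    _ = ∑ x ∈ s, (p.roots.count x - 1 + 1) := by
          refine (Finset.sum_congr rfl fun x hx => ?_)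
          rw [tsub_add_cancel_of_le]
          exact Nat.succ_le_iff.2 <| Multiset.count_pos.2 <|
            Multiset.mem_toFinset.1 (Finset.mem_filter.1 hx).1
    _ = (∑ x ∈ s, (p.rootMultiplicity x - 1)) + s.card := by
          simp only [Finset.sum_add_distrib, Finset.card_eq_sum_ones, count_roots]
    _ ≤ (∑ x ∈ s, (derivative p).rootMultiplicity x) + ((s' \ s).card + 1) :=
          add_le_add
            (Finset.sum_le_sum fun _ _ =>
              rootMultiplicity_sub_one_le_derivative_rootMultiplicity _ _)
            (card_pos_roots_toFinset p)
    _ ≤ (∑ x ∈ s, (derivative p).roots.count x) +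
          ((∑ x ∈ s' \ s, (derivative p).roots.count x) + 1) := by
          simp only [← count_roots]
          refine add_le_add_right (add_le_add_left ((Finset.card_eq_sum_ones _).trans_le ?_) _) _
          refine Finset.sum_le_sum fun x hx => Nat.succ_le_iff.2 <| ?_
          rw [Multiset.count_pos, ← Multiset.mem_toFinset]
          exact (Finset.mem_filter.1 (Finset.mem_sdiff.1 hx).1).1
    _ = (∑ x ∈ s, ((derivative p).roots.filter (fun x => (0:ℝ) < x)).count x) +
          ((∑ x ∈ s' \ s, ((derivative p).roots.filter (fun x => (0:ℝ) < x)).count x) + 1) := by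
          congr 1
          · refine Finset.sum_congr rfl fun x hx => ?_
            rw [Multiset.count_filter_of_pos (Finset.mem_filter.1 hx).2]
          congr 1
          refine Finset.sum_congr rfl fun x hx => ?_
          rw [Multiset.count_filter_of_pos
            (Finset.mem_filter.1 (Finset.mem_sdiff.1 hx).1).2]
    _ = Multiset.card ((derivative p).roots.filter (fun x => (0:ℝ) < x)) + 1 := by
          rw [← add_assoc, ← Finset.sum_union Finset.disjoint_sdiff,
            Finset.union_sdiff_self_eq_union, ← Multiset.toFinset_sum_count_eq, hts',
            ← Finset.sum_subset Finset.subset_union_right]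
          intro x _ hx₂
          rw [Multiset.count_eq_zero, ← Multiset.mem_toFinset, hts']
          exact hx₂

theorem card_pos_roots_iterate (p : ℝ[X]) (j : ℕ) :
    Multiset.card (p.roots.filter (fun x => (0:ℝ) < x)) ≤
      Multiset.card ((derivative^[j] p).roots.filter (fun x => (0:ℝ) < x)) + j := by
  induction j with
  | zero => simp
  | succ j ih =>
    refine ih.trans ?_
    rw [Function.iterate_succ_apply']
    have := card_pos_roots_le_derivative (derivative^[j] p)
    omega


/-- A nonzero vector in the hyperbolicity cone `H(eⁿₖ)` has at most `n − k` negative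
entries. -/
theorem hyperbolicity_cone_neg_entries (n k : ℕ) (hk1 : 1 ≤ k) (hkn : k ≤ n)
    (l : Fin n → ℝ) (hl : l ≠ 0)
    (hH : ∀ t : ℝ, esym n k (fun i => l i + t) = 0 → t ≤ 0) :
    ({i : Fin n | l i < 0} : Set (Fin n)).ncard ≤ n - k := by
  by_contra hcon
  push_neg at hcon
  set q : ℝ[X] := ∏ i : Fin n, (X + C (l i)) with hq
  -- roots of q
  have hqr : q.roots = Finset.univ.val.map (fun i : Fin n => -(l i)) := by
    have hq2 : q = ((Finset.univ.val.map (fun i : Fin n => -(l i))).map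
        (fun a => X - C a)).prod := by
      rw [hq, Finset.prod_eq_multiset_prod, Multiset.map_map]
      congr 1
      refine Multiset.map_congr rfl fun i _ => ?_
      simp [sub_neg_eq_add]
    rw [hq2, roots_multiset_prod_X_sub_C]
  -- the count of negative entries
  have hm : ({i : Fin n | l i < 0} : Set (Fin n)).ncard =
      Multiset.card (q.roots.filter (fun x => (0:ℝ) < x)) := by
    have hset : ({i : Fin n | l i < 0} : Set (Fin n)) =
        ↑(Finset.univ.filter (fun i => l i < 0)) := by
      ext i; simp
    rw [hset, Set.ncard_coe_finset, hqr, Multiset.filter_map, Multiset.card_map]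
    simp only [Function.comp_def, neg_pos]
    rfl
  -- apply the Rolle iteration
  have hiter := card_pos_roots_iterate q (n - k)
  have hpos : 0 < Multiset.card
      ((derivative^[n - k] q).roots.filter (fun x => (0:ℝ) < x)) := by omega
  have hne : (((derivative^[n - k] q).roots).filter (fun x => (0:ℝ) < x)) ≠ 0 := by
    intro h0
    rw [h0] at hpos
    simp at hpos
  obtain ⟨t, ht⟩ := Multiset.exists_mem_of_ne_zero hne
  rw [Multiset.mem_filter] at ht
  obtain ⟨htroot, htpos⟩ := ht
  have htzero : IsRoot (derivative^[n - k] q) t := (mem_roots'.1 htroot).2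
  -- the key identity
  have key : eval t (derivative^[n - k] q) =
      (Nat.factorial (n - k) : ℝ) * esym n k (fun i => l i + t) := by
    have hD : derivative^[n - k] q = Nat.factorial (n - k) • hasseDeriv (n - k) q := by
      rw [← factorial_smul_hasseDeriv]; rfl
    rw [hD, nsmul_eq_mul, eval_mul, eval_natCast, ← taylor_coeff, taylor_apply]
    congr 1
    have hcomp : q.comp (X + C t) = ∏ i : Fin n, (X + C (l i + t)) := by
      rw [hq, prod_comp]
      refine Finset.prod_congr rfl fun i _ => ?_
      rw [add_comp, X_comp, C_comp, add_assoc, ← C_add, add_comm t (l i)]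
    have hco := Finset.prod_X_add_C_coeff (s := (Finset.univ : Finset (Fin n)))
      (r := fun i => l i + t) (k := n - k) (by simp)
    simp only [Finset.card_univ, Fintype.card_fin] at hco
    have hnk : n - (n - k) = k := by omega
    rw [hcomp, hco, hnk, esym]
  rw [htzero] at key
  have : esym n k (fun i => l i + t) = 0 := by
    have hf : (Nat.factorial (n - k) : ℝ) ≠ 0 := Nat.cast_ne_zero.2 (Nat.factorial_ne_zero _)
    by_contra h0
    exact (mul_ne_zero hf h0) key.symm
  exact absurd (hH t this) (not_le.2 htpos)
end
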